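/- Define f₁ : ℝ² → ℝ by f₁(x) := 2x₁² + x₂² + x₂ + x₁² sin(ln|x₁|) if x₁ ≠ 0, and f₁(x) := x₂² + x₂ if x₁ = 0. Then f₁ is Fréchet differentiable on ℝ² with ∇f₁(x) = (4x₁ + 2x₁ sin(ln|x₁|) + x₁ cos(ln|x₁|), 2x₂ + 1) for x₁ ≠ 0 and ∇f₁(x) = (0, 2x₂ + 1) for x₁ = 0; moreover ∇f₁ is locally Lipschitz on ℝ² (so f₁ is a C^{1,1} function). -/

import Mathlib

/-!
Since `Real.log |t| = Real.log t`, `f₁ x = g (x 0) + (x 1) ^ 2 + x 1` with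
`g t = t² (2 + sin (log t))`. The bounded oscillating factor makes `g` differentiable at `0`
with `g' 0 = 0`, and `g'' = 4 + sin ∘ log + 3 cos ∘ log` is bounded by `8` off `0`, so the mean
value theorem on either side of `0` makes `g'` `8`-Lipschitz. A sum of functions of the
separate coordinates has the coordinatewise gradient, which inherits a common Lipschitz constant
in the Euclidean norm.
-/

open Filter Topology Set
open scoped InnerProductSpace

noncomputable section

/-- The `C^{1,1}` function `f₁` of Example 4.1. -/
def f1 (x : EuclideanSpace ℝ (Fin 2)) : ℝ :=
  if x 0 = 0 then (x 1) ^ 2 + x 1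
  else 2 * (x 0) ^ 2 + (x 1) ^ 2 + x 1 + (x 0) ^ 2 * Real.sin (Real.log |x 0|)

/-- The claimed gradient of `f₁`. -/
def grad1 (x : EuclideanSpace ℝ (Fin 2)) : EuclideanSpace ℝ (Fin 2) :=
  if x 0 = 0 then (WithLp.equiv 2 (Fin 2 → ℝ)).symm ![0, 2 * x 1 + 1]
  else (WithLp.equiv 2 (Fin 2 → ℝ)).symm
    ![4 * x 0 + 2 * x 0 * Real.sin (Real.log |x 0|) + x 0 * Real.cos (Real.log |x 0|),
      2 * x 1 + 1]

open Asymptotics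
open scoped NNReal

theorem hasDerivAt_sq_mul_of_abs_le {u : ℝ → ℝ} {C : ℝ} (hu : ∀ t, |u t| ≤ C) :
    HasDerivAt (fun t => t ^ 2 * u t) 0 0 := by
  rw [hasDerivAt_iff_isLittleO_nhds_zero]
  have hu_bdd : u =O[𝓝 0] fun _ => (1 : ℝ) :=
    IsBigO.of_bound C (Eventually.of_forall fun t => by simpa using hu t)
  simpa using (isLittleO_pow_id one_lt_two).mul_isBigO hu_bdd

theorem abs_sub_le_of_hasDerivAt_Ioo {h h' : ℝ → ℝ} {C : ℝ} (hc : Continuous h)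
    (hb : ∀ t, |h' t| ≤ C) {x y : ℝ} (hxy : x < y)
    (hd : ∀ t ∈ Ioo x y, HasDerivAt h (h' t) t) : |h y - h x| ≤ C * (y - x) := by
  obtain ⟨c, -, hc_eq⟩ := exists_hasDerivAt_eq_slope h h' hxy hc.continuousOn hd
  rw [eq_div_iff (sub_ne_zero.2 hxy.ne')] at hc_eq
  rw [← hc_eq, abs_mul, abs_of_pos (sub_pos.2 hxy)]
  exact mul_le_mul_of_nonneg_right (hb c) (sub_pos.2 hxy).le

theorem lipschitzWith_of_hasDerivAt_of_ne {h h' : ℝ → ℝ} {C : ℝ≥0} {a : ℝ}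
    (hc : ContinuousAt h a) (hd : ∀ t ≠ a, HasDerivAt h (h' t) t) (hb : ∀ t, |h' t| ≤ C) :
    LipschitzWith C h := by
  have hcont : Continuous h := continuous_iff_continuousAt.2 fun t =>
    if ht : t = a then ht ▸ hc else (hd t ht).continuousAt
  have off_a : ∀ x y, x < y → a ∉ Ioo x y → |h y - h x| ≤ C * (y - x) := fun x y hxy ha =>
    abs_sub_le_of_hasDerivAt_Ioo hcont hb hxy fun t ht => hd t fun hta => ha (hta ▸ ht)
  have ordered : ∀ x y, x < y → |h y - h x| ≤ C * (y - x) := by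
    intro x y hxy
    by_cases ha : a ∈ Ioo x y
    · calc |h y - h x| ≤ |h y - h a| + |h a - h x| := abs_sub_le _ _ _
        _ ≤ C * (y - a) + C * (a - x) := add_le_add
            (off_a a y ha.2 fun hy => lt_irrefl a hy.1) (off_a x a ha.1 fun hx => lt_irrefl a hx.2)
        _ = C * (y - x) := by ring
    · exact off_a x y hxy ha
  refine LipschitzWith.of_dist_le_mul fun x y => ?_
  rw [Real.dist_eq, Real.dist_eq]
  rcases lt_trichotomy x y with hxy | rfl | hxy
  · rw [abs_sub_comm, abs_sub_comm x, abs_of_pos (sub_pos.2 hxy)]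
    exact ordered x y hxy
  · simp
  · rw [abs_of_pos (sub_pos.2 hxy)]
    exact ordered y x hxy

theorem hasGradientAt_sum_apply {ι : Type*} [Fintype ι] {u u' : ι → ℝ → ℝ}
    {x : EuclideanSpace ℝ ι} (hu : ∀ i, HasDerivAt (u i) (u' i (x i)) (x i)) :
    HasGradientAt (fun y : EuclideanSpace ℝ ι => ∑ i, u i (y i))
      (WithLp.toLp 2 fun i => u' i (x i)) x := by
  rw [hasGradientAt_iff_hasFDerivAt]
  have hsum := HasFDerivAt.sum (u := Finset.univ) fun i _ =>
    (hu i).comp_hasFDerivAt x (EuclideanSpace.proj i : EuclideanSpace ℝ ι →L[ℝ] ℝ).hasFDerivAt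
  refine (hsum.congr_fderiv ?_).congr_of_eventuallyEq (Eventually.of_forall fun y => ?_)
  · ext v
    simp [PiLp.inner_apply, mul_comm]
  · simp

theorem lipschitzWith_toLp_apply {ι : Type*} [Fintype ι] {v : ι → ℝ → ℝ} {K : ℝ≥0}
    (hv : ∀ i, LipschitzWith K (v i)) :
    LipschitzWith K fun y : EuclideanSpace ℝ ι => WithLp.toLp 2 fun i => v i (y i) := by
  refine LipschitzWith.of_dist_le_mul fun x y => ?_
  rw [EuclideanSpace.dist_eq, EuclideanSpace.dist_eq, ← Real.sqrt_sq K.coe_nonneg,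
    ← Real.sqrt_mul (sq_nonneg _), Finset.mul_sum]
  refine Real.sqrt_le_sqrt (Finset.sum_le_sum fun i _ => ?_)
  rw [← mul_pow]
  exact pow_le_pow_left₀ dist_nonneg ((hv i).dist_le_mul _ _) 2

def oscQuad (t : ℝ) : ℝ := t ^ 2 * (2 + Real.sin (Real.log t))

def oscQuadDeriv (t : ℝ) : ℝ :=
  t * (4 + 2 * Real.sin (Real.log t) + Real.cos (Real.log t))

theorem hasDerivAt_oscQuad (t : ℝ) : HasDerivAt oscQuad (oscQuadDeriv t) t := by
  rcases eq_or_ne t 0 with rfl | ht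
  · rw [show oscQuadDeriv 0 = 0 by simp [oscQuadDeriv]]
    refine hasDerivAt_sq_mul_of_abs_le (C := 3) fun s => abs_le.2 ⟨?_, ?_⟩ <;>
      linarith [Real.neg_one_le_sin (Real.log s), Real.sin_le_one (Real.log s)]
  · refine ((hasDerivAt_pow 2 t).mul ((Real.hasDerivAt_log ht).sin.const_add 2)).congr_deriv ?_
    simp only [oscQuadDeriv]
    field_simp
    ring

theorem hasDerivAt_oscQuadDeriv {t : ℝ} (ht : t ≠ 0) :
    HasDerivAt oscQuadDeriv (4 + Real.sin (Real.log t) + 3 * Real.cos (Real.log t)) t := by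
  have hlog := Real.hasDerivAt_log ht
  refine ((hasDerivAt_id' t).mul
    (((hlog.sin.const_mul 2).const_add 4).add hlog.cos)).congr_deriv ?_
  simp only [Pi.add_apply]
  field_simp
  ring

theorem abs_oscQuadDeriv_le (t : ℝ) : |oscQuadDeriv t| ≤ 7 * |t| := by
  rw [oscQuadDeriv, abs_mul, mul_comm]
  refine mul_le_mul_of_nonneg_right (abs_le.2 ⟨?_, ?_⟩) (abs_nonneg t) <;>
    linarith [Real.neg_one_le_sin (Real.log t), Real.sin_le_one (Real.log t),
      Real.neg_one_le_cos (Real.log t), Real.cos_le_one (Real.log t)]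

theorem lipschitzWith_oscQuadDeriv : LipschitzWith 8 oscQuadDeriv := by
  refine lipschitzWith_of_hasDerivAt_of_ne (a := 0) ?_ (fun t ht => hasDerivAt_oscQuadDeriv ht)
    fun t => abs_le.2 ⟨?_, ?_⟩
  · refine continuousAt_of_locally_lipschitz one_pos 7 fun y _ => ?_
    simpa [Real.dist_eq, oscQuadDeriv] using abs_oscQuadDeriv_le y
  all_goals
    push_cast
    linarith [Real.neg_one_le_sin (Real.log t), Real.sin_le_one (Real.log t),
      Real.neg_one_le_cos (Real.log t), Real.cos_le_one (Real.log t)]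

theorem f1_eq_sum (x : EuclideanSpace ℝ (Fin 2)) :
    f1 x = ∑ i, ![oscQuad, fun s => s ^ 2 + s] i (x i) := by
  rcases eq_or_ne (x 0) 0 with h | h
  · simp [f1, oscQuad, h]
  · simp [f1, oscQuad, h, Real.log_abs]
    ring

theorem grad1_eq_toLp (x : EuclideanSpace ℝ (Fin 2)) :
    grad1 x = WithLp.toLp 2 fun i => ![oscQuadDeriv, fun s => 2 * s + 1] i (x i) := by
  ext i
  rcases eq_or_ne (x 0) 0 with h | h
  · fin_cases i <;> simp [grad1, oscQuadDeriv, h]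
  · fin_cases i
    · simp [grad1, oscQuadDeriv, h, Real.log_abs]
      ring
    · simp [grad1, h]

/-- Example 4.1: `f₁` is Fréchet differentiable with the indicated gradient, and the
gradient is locally Lipschitz, i.e. `f₁` is a `C^{1,1}` function. -/
theorem stmt_14 :
    Differentiable ℝ f1 ∧
    (∀ x, gradient f1 x = grad1 x) ∧
    LocallyLipschitz (gradient f1) := by
  have hf1 : ∀ x, HasGradientAt f1 (grad1 x) x := fun x => by
    rw [funext f1_eq_sum, grad1_eq_toLp]
    refine hasGradientAt_sum_apply fun i => ?_
    fin_cases i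
    · exact hasDerivAt_oscQuad _
    · exact ((hasDerivAt_pow 2 (x 1)).add (hasDerivAt_id' (x 1))).congr_deriv (by simp)
  have hgrad : gradient f1 = grad1 := funext fun x => (hf1 x).gradient
  refine ⟨fun x => (hf1 x).differentiableAt, fun x => congrFun hgrad x, ?_⟩
  rw [hgrad, funext grad1_eq_toLp]
  refine (lipschitzWith_toLp_apply (K := 8) fun i => ?_).locallyLipschitz
  fin_cases i
  · exact lipschitzWith_oscQuadDeriv
  · show LipschitzWith 8 fun s : ℝ => 2 * s + 1
    exact lipschitzWith_of_hasDerivAt_of_ne (a := 0) (h' := fun _ => 2) (by fun_prop)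
      (fun t _ => by simpa using ((hasDerivAt_id t).const_mul 2).add_const 1)
      fun _ => by norm_num
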